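/- Suppose smooth functions p, q, a, b : ℝ² → ℝ satisfy the affine Gauss–Codazzi equations: (q_x + aq + (1/2)b² − b_y)_x = 2q p_y + p q_y, (p_y + bp + (1/2)a² − a_x)_y = 2p q_x + q p_x, and a_y = b_x. Let r⁰ be a smooth positive function with a = −2(log r⁰)_x and b = −2(log r⁰)_y, and define V = p_y + bp + (1/2)a² − a_x, W = q_x + aq + (1/2)b² − b_y. Then (p, q, V, W) satisfies the projective Gauss–Codazzi equations: p_yyy − 2p_y W − p W_y = q_xxx − 2q_x V − q V_x, W_x = 2q p_y + p q_y, V_y = 2p q_x + q p_x. -/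

import Mathlib

noncomputable def px {E : Type*} [NormedAddCommGroup E] [NormedSpace ℝ E]
    (f : ℝ → ℝ → E) : ℝ → ℝ → E := fun x y => deriv (fun x' => f x' y) x

noncomputable def py {E : Type*} [NormedAddCommGroup E] [NormedSpace ℝ E]
    (f : ℝ → ℝ → E) : ℝ → ℝ → E := fun x y => deriv (fun y' => f x y') y

def Smooth2 {E : Type*} [NormedAddCommGroup E] [NormedSpace ℝ E]
    (f : ℝ → ℝ → E) : Prop := ContDiff ℝ (⊤ : ℕ∞) (fun q : ℝ × ℝ => f q.1 q.2)

section API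
variable {f g : ℝ → ℝ → ℝ} {x y : ℝ}

lemma Smooth2.uncDiff (hf : Smooth2 f) : Differentiable ℝ (fun q : ℝ × ℝ => f q.1 q.2) :=
  hf.differentiable (by simp)

lemma sliceX (hf : Smooth2 f) (x y : ℝ) : HasDerivAt (fun x' => f x' y) (px f x y) x := by
  have h1 : DifferentiableAt ℝ (fun x' : ℝ => f x' y) x := by
    have h : (fun x' : ℝ => f x' y) = (fun q : ℝ × ℝ => f q.1 q.2) ∘ (fun x' => (x', y)) := rfl
    rw [h]
    exact (hf.uncDiff _).comp x (DifferentiableAt.prodMk differentiableAt_id (differentiableAt_const y))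
  exact h1.hasDerivAt

lemma sliceY (hf : Smooth2 f) (x y : ℝ) : HasDerivAt (fun y' => f x y') (py f x y) y := by
  have h1 : DifferentiableAt ℝ (fun y' : ℝ => f x y') y := by
    have h : (fun y' : ℝ => f x y') = (fun q : ℝ × ℝ => f q.1 q.2) ∘ (fun y' => (x, y')) := rfl
    rw [h]
    exact (hf.uncDiff _).comp y (DifferentiableAt.prodMk (differentiableAt_const x) differentiableAt_id)
  exact h1.hasDerivAt

lemma px_fderiv (hf : Smooth2 f) (x y : ℝ) :
    px f x y = fderiv ℝ (fun q : ℝ × ℝ => f q.1 q.2) (x, y) (1, 0) := by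
  have h := ((hf.uncDiff (x, y)).hasFDerivAt.comp_hasDerivAt x
    (HasDerivAt.prodMk (hasDerivAt_id x) (hasDerivAt_const x y)))
  exact h.deriv

lemma py_fderiv (hf : Smooth2 f) (x y : ℝ) :
    py f x y = fderiv ℝ (fun q : ℝ × ℝ => f q.1 q.2) (x, y) (0, 1) := by
  have h := ((hf.uncDiff (x, y)).hasFDerivAt.comp_hasDerivAt y
    (HasDerivAt.prodMk (hasDerivAt_const y x) (hasDerivAt_id y)))
  exact h.deriv

lemma Smooth2.ppx (hf : Smooth2 f) : Smooth2 (px f) := by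
  have h : (fun q : ℝ × ℝ => px f q.1 q.2)
      = fun q => fderiv ℝ (fun q : ℝ × ℝ => f q.1 q.2) q ((1 : ℝ), (0 : ℝ)) := by
    funext q; exact px_fderiv hf q.1 q.2
  unfold Smooth2
  rw [h]
  exact (hf.fderiv_right (by simp)).clm_apply contDiff_const

lemma Smooth2.ppy (hf : Smooth2 f) : Smooth2 (py f) := by
  have h : (fun q : ℝ × ℝ => py f q.1 q.2)
      = fun q => fderiv ℝ (fun q : ℝ × ℝ => f q.1 q.2) q ((0 : ℝ), (1 : ℝ)) := by
    funext q; exact py_fderiv hf q.1 q.2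
  unfold Smooth2
  rw [h]
  exact (hf.fderiv_right (by simp)).clm_apply contDiff_const

lemma Smooth2.padd (hf : Smooth2 f) (hg : Smooth2 g) : Smooth2 (fun x y => f x y + g x y) :=
  hf.add hg

lemma Smooth2.psub (hf : Smooth2 f) (hg : Smooth2 g) : Smooth2 (fun x y => f x y - g x y) :=
  hf.sub hg

lemma Smooth2.pmul (hf : Smooth2 f) (hg : Smooth2 g) : Smooth2 (fun x y => f x y * g x y) :=
  hf.mul hg

lemma Smooth2.constMul (hf : Smooth2 f) (c : ℝ) : Smooth2 (fun x y => c * f x y) :=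
  contDiff_const.mul hf

lemma Smooth2.pow2 (hf : Smooth2 f) : Smooth2 (fun x y => (f x y) ^ 2) :=
  hf.pow 2

lemma px_py (hf : Smooth2 f) (x y : ℝ) : px (py f) x y = py (px f) x y := by
  set F : ℝ × ℝ → ℝ := fun q => f q.1 q.2 with hF
  set N : ℝ × ℝ → (ℝ × ℝ) →L[ℝ] ℝ := fderiv ℝ F with hN
  have hNs : ContDiff ℝ (⊤ : ℕ∞) N := hf.fderiv_right (by simp)
  have hpyf : py f = fun x y => N (x, y) (0, 1) := funext fun u => funext fun v => py_fderiv hf u v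
  have hpxf : px f = fun x y => N (x, y) (1, 0) := funext fun u => funext fun v => px_fderiv hf u v
  rw [hpyf, hpxf]
  have hNx : HasDerivAt (fun x' => N (x', y)) (fderiv ℝ N (x, y) (1, 0)) x :=
    ((hNs.differentiable (by simp) (x, y)).hasFDerivAt.comp_hasDerivAt x
      (HasDerivAt.prodMk (hasDerivAt_id x) (hasDerivAt_const x y)))
  have hNy : HasDerivAt (fun y' => N (x, y')) (fderiv ℝ N (x, y) (0, 1)) y :=
    ((hNs.differentiable (by simp) (x, y)).hasFDerivAt.comp_hasDerivAt y
      (HasDerivAt.prodMk (hasDerivAt_const y x) (hasDerivAt_id y)))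
  have h1 : px (fun x y => N (x, y) (0, 1)) x y = fderiv ℝ N (x, y) (1, 0) (0, 1) := by
    have h := (hNx.clm_apply (hasDerivAt_const x ((0 : ℝ), (1 : ℝ)))).deriv
    simpa [px] using h
  have h2 : py (fun x y => N (x, y) (1, 0)) x y = fderiv ℝ N (x, y) (0, 1) (1, 0) := by
    have h := (hNy.clm_apply (hasDerivAt_const y ((1 : ℝ), (0 : ℝ)))).deriv
    simpa [py] using h
  rw [h1, h2]
  exact (hf.contDiffAt.isSymmSndFDerivAt (by rw [minSmoothness_of_isRCLikeNormedField]; exact WithTop.coe_le_coe.mpr le_top)) (1, 0) (0, 1)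

lemma px_pyF (hf : Smooth2 f) : px (py f) = py (px f) :=
  funext fun u => funext fun v => px_py hf u v

end API

/-- From the affine Gauss–Codazzi equations for `(p, q, a, b)`, with
`a = -2(log r⁰)_x`, `b = -2(log r⁰)_y` and the projective invariants
`V = p_y + bp + a²/2 - a_x`, `W = q_x + aq + b²/2 - b_y`, one obtains the
projective Gauss–Codazzi equations for `(p, q, V, W)`. -/
theorem affine_to_projective_GC (p q a b r0 V W : ℝ → ℝ → ℝ)
    (hp : Smooth2 p) (hq : Smooth2 q) (ha : Smooth2 a) (hb : Smooth2 b)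
    (hr0 : Smooth2 r0) (hr0pos : ∀ x y, 0 < r0 x y)
    (hGC1 : ∀ x y, px (fun x y => px q x y + a x y * q x y + (1/2) * (b x y) ^ 2 - py b x y) x y =
      2 * q x y * py p x y + p x y * py q x y)
    (hGC2 : ∀ x y, py (fun x y => py p x y + b x y * p x y + (1/2) * (a x y) ^ 2 - px a x y) x y =
      2 * p x y * px q x y + q x y * px p x y)
    (hGC3 : ∀ x y, py a x y = px b x y)
    (haDef : ∀ x y, a x y = -2 * px (fun x y => Real.log (r0 x y)) x y)
    (hbDef : ∀ x y, b x y = -2 * py (fun x y => Real.log (r0 x y)) x y)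
    (hV : ∀ x y, V x y = py p x y + b x y * p x y + (1/2) * (a x y) ^ 2 - px a x y)
    (hW : ∀ x y, W x y = px q x y + a x y * q x y + (1/2) * (b x y) ^ 2 - py b x y) :
    (∀ x y, py (py (py p)) x y - 2 * py p x y * W x y - p x y * py W x y =
      px (px (px q)) x y - 2 * px q x y * V x y - q x y * px V x y) ∧
    (∀ x y, px W x y = 2 * q x y * py p x y + p x y * py q x y) ∧
    (∀ x y, py V x y = 2 * p x y * px q x y + q x y * px p x y) := by
  have hVf : V = fun x y => py p x y + b x y * p x y + (1/2) * (a x y) ^ 2 - px a x y :=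
    funext fun u => funext fun v => hV u v
  have hWf : W = fun x y => px q x y + a x y * q x y + (1/2) * (b x y) ^ 2 - py b x y :=
    funext fun u => funext fun v => hW u v
  have hGC3f : py a = px b := funext fun u => funext fun v => hGC3 u v
  have sV : Smooth2 V := by
    rw [hVf]; exact ((hp.ppy.padd (hb.pmul hp)).padd (ha.pow2.constMul (1/2))).psub ha.ppx
  have sW : Smooth2 W := by
    rw [hWf]; exact ((hq.ppx.padd (ha.pmul hq)).padd (hb.pow2.constMul (1/2))).psub hb.ppy
  have hpyV : ∀ u v, py V u v = 2 * p u v * px q u v + q u v * px p u v := by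
    intro u v; rw [hVf]; exact hGC2 u v
  have hpxW : ∀ u v, px W u v = 2 * q u v * py p u v + p u v * py q u v := by
    intro u v; rw [hWf]; exact hGC1 u v
  have hPy : py p = fun x y => V x y - b x y * p x y - (1/2) * (a x y) ^ 2 + px a x y := by
    funext u v; have h := hV u v; linarith
  have hQx : px q = fun x y => W x y - a x y * q x y - (1/2) * (b x y) ^ 2 + py b x y := by
    funext u v; have h := hW u v; linarith
  have hPyy : py (py p) = fun x y => (2 * p x y * px q x y + q x y * px p x y)
      - (py b x y * p x y + b x y * py p x y) - a x y * py a x y + py (px a) x y := by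
    funext u v
    conv_lhs => rw [hPy]
    have H := (((sliceY sV u v).sub ((sliceY hb u v).mul (sliceY hp u v))).sub
        (((sliceY ha u v).pow 2).const_mul (1/2))).add (sliceY ha.ppx u v)
    exact H.deriv.trans (by rw [hpyV u v]; push_cast; ring)
  have hQxx : px (px q) = fun x y => (2 * q x y * py p x y + p x y * py q x y)
      - (px a x y * q x y + a x y * px q x y) - b x y * px b x y + px (py b) x y := by
    funext u v
    conv_lhs => rw [hQx]
    have H := (((sliceX sW u v).sub ((sliceX ha u v).mul (sliceX hq u v))).sub
        (((sliceX hb u v).pow 2).const_mul (1/2))).add (sliceX hb.ppy u v)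
    exact H.deriv.trans (by rw [hpxW u v]; push_cast; ring)
  have h5 : py (px a) = px (px b) := by rw [← px_pyF ha, hGC3f]
  refine ⟨fun x y => ?_, fun x y => by rw [hWf]; exact hGC1 x y,
    fun x y => by rw [hVf]; exact hGC2 x y⟩
  have e1 : py (py (py p)) x y =
      (2 * py p x y * px q x y + 2 * p x y * py (px q) x y
        + (py q x y * px p x y + q x y * py (px p) x y))
      - ((py (py b) x y * p x y + py b x y * py p x y)
        + (py b x y * py p x y + b x y * py (py p) x y))
      - (py a x y * py a x y + a x y * py (py a) x y)
      + py (py (px a)) x y := by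
    conv_lhs => rw [hPyy]
    have H1 := ((sliceY hp x y).const_mul 2).mul (sliceY hq.ppx x y)
    have H2 := (sliceY hq x y).mul (sliceY hp.ppx x y)
    have H3 := ((sliceY hb.ppy x y).mul (sliceY hp x y)).add
      ((sliceY hb x y).mul (sliceY hp.ppy x y))
    have H4 := (sliceY ha x y).mul (sliceY ha.ppy x y)
    have H5 := sliceY ha.ppx.ppy x y
    have H := (((H1.add H2).sub H3).sub H4).add H5
    exact H.deriv.trans (by ring)
  have e2 : px (px (px q)) x y =
      (2 * px q x y * py p x y + 2 * q x y * px (py p) x y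
        + (px p x y * py q x y + p x y * px (py q) x y))
      - ((px (px a) x y * q x y + px a x y * px q x y)
        + (px a x y * px q x y + a x y * px (px q) x y))
      - (px b x y * px b x y + b x y * px (px b) x y)
      + px (px (py b)) x y := by
    conv_lhs => rw [hQxx]
    have H1 := ((sliceX hq x y).const_mul 2).mul (sliceX hp.ppy x y)
    have H2 := (sliceX hp x y).mul (sliceX hq.ppy x y)
    have H3 := ((sliceX ha.ppx x y).mul (sliceX hq x y)).add
      ((sliceX ha x y).mul (sliceX hq.ppx x y))
    have H4 := (sliceX hb x y).mul (sliceX hb.ppx x y)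
    have H5 := sliceX hb.ppy.ppx x y
    have H := (((H1.add H2).sub H3).sub H4).add H5
    exact H.deriv.trans (by ring)
  have eW : py W x y = py (px q) x y + (py a x y * q x y + a x y * py q x y)
      + b x y * py b x y - py (py b) x y := by
    conv_lhs => rw [hWf]
    have H := (((sliceY hq.ppx x y).add ((sliceY ha x y).mul (sliceY hq x y))).add
        (((sliceY hb x y).pow 2).const_mul (1/2))).sub (sliceY hb.ppy x y)
    exact H.deriv.trans (by push_cast; ring)
  have eV : px V x y = px (py p) x y + (px b x y * p x y + b x y * px p x y)
      + a x y * px a x y - px (px a) x y := by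
    conv_lhs => rw [hVf]
    have H := (((sliceX hp.ppy x y).add ((sliceX hb x y).mul (sliceX hp x y))).add
        (((sliceX ha x y).pow 2).const_mul (1/2))).sub (sliceX ha.ppx x y)
    exact H.deriv.trans (by push_cast; ring)
  have n2 : py (py a) x y = px (py b) x y := by rw [hGC3f, ← px_py hb x y]
  have n4 : py (py (px a)) x y = px (px (py b)) x y := by
    rw [h5, ← px_py hb.ppx x y, px_pyF hb]
  have cl_q : py (px q) x y = px (py q) x y := (px_py hq x y).symm
  have cl_p : py (px p) x y = px (py p) x y := (px_py hp x y).symm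
  rw [e1, e2, eW, eV]
  simp only [hPyy, hQxx]
  rw [n2, n4, cl_q, cl_p, h5, hGC3 x y, hV x y, hW x y]
  ring
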